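/- arXiv:2109.12289 — 2 statements merged into one kernel-verified Lean document; each statement's English description precedes it below -/
import Mathlib

section
/- For a finite set of at least 3 points in the Euclidean plane not all collinear, every point of the set lying in the interior of the convex hull is at positive distance from the set of extreme points (vertices) of the convex hull, and moving such a point to its nearest extreme point strictly decreases the sum over all points of the distance to the nearest extreme point, while leaving the convex hull unchanged. -/
/-!
An interior point `p` of the hull is not an extreme point, so its nearest vertex `nv` is at
positive distance. By Krein–Milman the hull of a finite set is already spanned by its extreme
points, all of which lie in `S \ {p}`; hence replacing `p` by any point of the hull leaves the hull
unchanged. Finally, a point `p' ≠ p` of the segment `[p, nv]` is strictly closer to `nv` than `p`,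
which bounds its contribution to the potential by less than `dist p nv = infDist p V`.
-/

open scoped Classical

open Metric

section ExtremePoints

variable {E : Type*} [AddCommGroup E] [Module ℝ E] [TopologicalSpace E] [T2Space E]
  [IsTopologicalAddGroup E] [ContinuousSMul ℝ E] [LocallyConvexSpace ℝ E] {s : Set E}

theorem Set.Finite.convexHull_extremePoints_convexHull (hs : s.Finite) :
    convexHull ℝ ((convexHull ℝ s).extremePoints ℝ) = convexHull ℝ s := by
  have hclosed : IsClosed (convexHull ℝ ((convexHull ℝ s).extremePoints ℝ)) :=
    (hs.subset extremePoints_convexHull_subset).isClosed_convexHull ℝ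
  rw [← hclosed.closure_eq]
  exact closure_convexHull_extremePoints (hs.isCompact_convexHull ℝ) (convex_convexHull ℝ s)

theorem Set.Finite.convexHull_insert_sdiff_eq {p q : E} (hs : s.Finite)
    (hp : p ∉ (convexHull ℝ s).extremePoints ℝ) (hq : q ∈ convexHull ℝ s) :
    convexHull ℝ (insert q (s \ {p})) = convexHull ℝ s := by
  refine le_antisymm ?_ ?_
  · exact convexHull_min (Set.insert_subset hq (Set.sdiff_subset.trans (subset_convexHull ℝ s)))
      (convex_convexHull ℝ s)
  · have hext : (convexHull ℝ s).extremePoints ℝ ⊆ insert q (s \ {p}) := fun x hx =>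
      Or.inr ⟨extremePoints_convexHull_subset hx, fun hxp => hp (hxp ▸ hx)⟩
    rw [← hs.convexHull_extremePoints_convexHull]
    exact convexHull_mono hext

end ExtremePoints

theorem dist_lt_of_mem_segment {E : Type*} [NormedAddCommGroup E] [NormedSpace ℝ E]
    {x y z : E} (hy : y ∈ segment ℝ x z) (hyx : y ≠ x) : dist y z < dist x z := by
  rw [← dist_add_dist_of_mem_segment hy]
  linarith [dist_pos.2 hyx.symm]

theorem Metric.infDist_eq_dist_of_forall_le {α : Type*} [PseudoMetricSpace α] {x y : α}
    {s : Set α} (hy : y ∈ s) (hle : ∀ z ∈ s, dist x y ≤ dist x z) : infDist x s = dist x y :=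
  le_antisymm (infDist_le_dist_of_mem hy) ((le_infDist ⟨y, hy⟩).2 hle)

theorem stmt2_general (S : Finset (EuclideanSpace ℝ (Fin 2)))
    (V : Set (EuclideanSpace ℝ (Fin 2)))
    (hV : V = Set.extremePoints ℝ (convexHull ℝ (S : Set (EuclideanSpace ℝ (Fin 2)))))
    (p : EuclideanSpace ℝ (Fin 2)) (hp : p ∈ S)
    (hint : p ∈ interior (convexHull ℝ (S : Set (EuclideanSpace ℝ (Fin 2)))))
    (nv : EuclideanSpace ℝ (Fin 2)) (hnv : nv ∈ V)
    (hnear : ∀ w ∈ V, dist p nv ≤ dist p w) :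
    0 < infDist p V ∧
    ∀ p' ∈ segment ℝ p nv, p' ≠ p →
      (p' ∈ interior (convexHull ℝ (S : Set (EuclideanSpace ℝ (Fin 2)))) ∨ p' ∈ V) →
      (convexHull ℝ (insert p' ((S : Set (EuclideanSpace ℝ (Fin 2))) \ {p}))
          = convexHull ℝ (S : Set (EuclideanSpace ℝ (Fin 2))) ∧
        infDist p' V + ∑ q ∈ S.erase p, infDist q V < ∑ q ∈ S, infDist q V) := by
  have hpV : p ∉ V := hV ▸ (disjoint_interior_extremePoints _).notMem_of_mem_left hint
  have hinf : infDist p V = dist p nv := infDist_eq_dist_of_forall_le hnv hnear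
  refine ⟨hinf ▸ dist_pos.2 fun h => hpV (h ▸ hnv), fun p' hp' hp'p _ => ⟨?_, ?_⟩⟩
  · have hnvK : nv ∈ convexHull ℝ (S : Set (EuclideanSpace ℝ (Fin 2))) := (hV ▸ hnv).1
    exact S.finite_toSet.convexHull_insert_sdiff_eq (hV ▸ hpV)
      ((convex_convexHull ℝ _).segment_subset (subset_convexHull ℝ _ hp) hnvK hp')
  · have hdecr : infDist p' V < infDist p V :=
      calc infDist p' V ≤ dist p' nv := infDist_le_dist_of_mem hnv
        _ < dist p nv := dist_lt_of_mem_segment hp' hp'p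
        _ = infDist p V := hinf.symm
    rw [← Finset.add_sum_erase S _ hp]
    linarith

/-- Moving an interior point of a finite planar configuration towards its nearest
extreme point (vertex of the convex hull) keeps the hull unchanged (as long as
the new position is interior or a vertex) and strictly decreases the sum of
distances to the nearest vertices; moreover the interior point is at positive
distance from the vertex set. -/
theorem stmt2 (S : Finset (EuclideanSpace ℝ (Fin 2))) (h3 : 3 ≤ S.card)
    (hnc : ¬ Collinear ℝ (S : Set (EuclideanSpace ℝ (Fin 2))))
    (V : Set (EuclideanSpace ℝ (Fin 2)))
    (hV : V = Set.extremePoints ℝ (convexHull ℝ (S : Set (EuclideanSpace ℝ (Fin 2)))))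
    (p : EuclideanSpace ℝ (Fin 2)) (hp : p ∈ S)
    (hint : p ∈ interior (convexHull ℝ (S : Set (EuclideanSpace ℝ (Fin 2)))))
    (nv : EuclideanSpace ℝ (Fin 2)) (hnv : nv ∈ V)
    (hnear : ∀ w ∈ V, dist p nv ≤ dist p w) :
    0 < infDist p V ∧
    ∀ p' ∈ segment ℝ p nv, p' ≠ p →
      (p' ∈ interior (convexHull ℝ (S : Set (EuclideanSpace ℝ (Fin 2)))) ∨ p' ∈ V) →
      (convexHull ℝ (insert p' ((S : Set (EuclideanSpace ℝ (Fin 2))) \ {p}))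
          = convexHull ℝ (S : Set (EuclideanSpace ℝ (Fin 2))) ∧
        infDist p' V + ∑ q ∈ S.erase p, infDist q V < ∑ q ∈ S, infDist q V) :=
  stmt2_general S V hV p hp hint nv hnv hnear
end

section
/- Strict decrease of the Gathering potential under endpoint-to-midpoint moves: let a finite multiset of points lie on a segment with endpoints p_l, p_r and midpoint p_m. If a nonempty subset of the points located at p_l and p_r each move toward p_m by positive distances (staying on the segment), and no other point moves, then the sum over all points of the distance to p_m strictly decreases, while the segment spanned by the new configuration has length at most dist(p_l, p_r). -/
/-- Endpoint-to-midpoint moves strictly decrease the Gathering potential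
`Φ = Σ dist(·, p_m)`: for a finite configuration on the segment `[p_l, p_r]`,
if a nonempty set of points located at the endpoints each move towards the
midpoint by a positive distance (staying on their half-segments) and all other
points stay put, then `Φ` strictly decreases and the new configuration still
spans a segment of length at most `dist p_l p_r`. -/
theorem stmt12 (pl pr : EuclideanSpace ℝ (Fin 2)) (hlr : pl ≠ pr)
    (pm : EuclideanSpace ℝ (Fin 2)) (hm : pm = midpoint ℝ pl pr)
    (n : ℕ) (x x' : Fin n → EuclideanSpace ℝ (Fin 2))
    (hseg : ∀ i, x i ∈ segment ℝ pl pr)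
    (Mv : Finset (Fin n)) (hMv : Mv.Nonempty)
    (hMvloc : ∀ i ∈ Mv, x i = pl ∨ x i = pr)
    (hmove : ∀ i ∈ Mv,
      (x i = pl → x' i ∈ segment ℝ pl pm ∧ x' i ≠ pl) ∧
      (x i = pr → x' i ∈ segment ℝ pr pm ∧ x' i ≠ pr))
    (hstay : ∀ i ∉ Mv, x' i = x i) :
    (∑ i, dist (x' i) pm < ∑ i, dist (x i) pm) ∧
    ∀ i j, dist (x' i) (x' j) ≤ dist pl pr := by
  have hpm : pm ∈ segment ℝ pl pr := hm ▸ midpoint_mem_segment pl pr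
  have hsubl : segment ℝ pl pm ⊆ segment ℝ pl pr :=
    (convex_segment pl pr).segment_subset (left_mem_segment ℝ pl pr) hpm
  have hsubr : segment ℝ pr pm ⊆ segment ℝ pl pr :=
    (convex_segment pl pr).segment_subset (right_mem_segment ℝ pl pr) hpm
  have hseg' : ∀ i, x' i ∈ segment ℝ pl pr := by
    intro i
    by_cases hi : i ∈ Mv
    · rcases hMvloc i hi with h | h
      · exact hsubl ((hmove i hi).1 h).1
      · exact hsubr ((hmove i hi).2 h).1
    · rw [hstay i hi]; exact hseg i
  have hstrict : ∀ i ∈ Mv, dist (x' i) pm < dist (x i) pm := by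
    intro i hi
    rcases hMvloc i hi with h | h
    · obtain ⟨hs, hne⟩ := (hmove i hi).1 h
      have := dist_add_dist_of_mem_segment hs
      have hpos : 0 < dist pl (x' i) := dist_pos.2 fun e => hne e.symm
      rw [h]; linarith
    · obtain ⟨hs, hne⟩ := (hmove i hi).2 h
      have := dist_add_dist_of_mem_segment hs
      have hpos : 0 < dist pr (x' i) := dist_pos.2 fun e => hne e.symm
      rw [h]; linarith
  constructor
  · obtain ⟨i₀, hi₀⟩ := hMv
    refine Finset.sum_lt_sum (fun i _ => ?_) ⟨i₀, Finset.mem_univ i₀, hstrict i₀ hi₀⟩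
    by_cases hi : i ∈ Mv
    · exact (hstrict i hi).le
    · rw [hstay i hi]
  · intro i j
    have h1 := (mem_segment_iff_wbtw.1 (hseg' i)).dist_le_max_dist (x' j)
    have h2 := (mem_segment_iff_wbtw.1 (hseg' j)).dist_le_max_dist pl
    have h3 := (mem_segment_iff_wbtw.1 (hseg' j)).dist_le_max_dist pr
    rw [dist_self, dist_comm pr pl, sup_of_le_right dist_nonneg] at h2
    rw [dist_self, sup_of_le_left dist_nonneg] at h3
    rw [dist_comm pl (x' j), dist_comm pr (x' j)] at h1
    exact h1.trans (max_le h2 h3)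
end
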